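/- arXiv:1710.00229 — 2 statements merged into one kernel-verified Lean document; each statement's English description precedes it below -/
import Mathlib

section
/- For the ARMAX process X_t = max{α X_{t−1}, (1−α)Z_t} with iid standard Fréchet Z_t, 0 ≤ α < 1, and x_ρ the (1−ρ)-quantile of X_1, the first hitting time satisfies P{T*(x_ρ) = j} = (1 − (1−ρ)^θ)(1−ρ)^{θ(j−2)+1} for j ≥ 2, where θ = 1−α. -/
/-!
If the level `u > 0` has not been exceeded at time `t`, then `α X_t ≤ α u ≤ u`, so
`X_{t+1} ≤ u` holds exactly when `(1 - α) Z_{t+1} ≤ u`. Hence the first passage of `u` happens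
at time `j ≥ 2` iff `α Z_0 ≤ u`, `(1 - α) Z_i ≤ u` for `1 ≤ i < j` and `(1 - α) Z_j > u`: an
intersection of independent events whose Fréchet probabilities `q^α`, `q^(1-α)`, `1 - q^(1-α)`
(with `q = exp(-1/u)`) multiply to the claimed formula.
-/

open MeasureTheory ProbabilityTheory Finset

section MaxRecursion

variable {x z : ℕ → ℝ} {a c u : ℝ}

theorem max_rec_succ_le_iff (ha0 : 0 ≤ a) (ha1 : a ≤ 1) (hu : 0 ≤ u)
    (hx : ∀ t, x (t + 1) = max (a * x t) (c * z (t + 1))) {t : ℕ} (ht : x t ≤ u) :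
    x (t + 1) ≤ u ↔ c * z (t + 1) ≤ u := by
  have hax : a * x t ≤ u := (mul_le_mul_of_nonneg_left ht ha0).trans (mul_le_of_le_one_left hu ha1)
  rw [hx, max_le_iff, and_iff_right hax]

theorem forall_lt_succ_le_iff_of_max_rec (ha0 : 0 ≤ a) (ha1 : a ≤ 1) (hu : 0 ≤ u)
    (hx : ∀ t, x (t + 1) = max (a * x t) (c * z (t + 1))) (n : ℕ) :
    (∀ i < n + 1, x (i + 1) ≤ u) ↔ a * x 0 ≤ u ∧ ∀ i < n + 1, c * z (i + 1) ≤ u := by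
  induction n with
  | zero => simp [hx]
  | succ n ih =>
    rw [Nat.forall_lt_succ_right (n := n + 1), Nat.forall_lt_succ_right (n := n + 1), ← and_assoc,
      ← ih]
    exact and_congr_right fun h => max_rec_succ_le_iff ha0 ha1 hu hx (h n n.lt_succ_self)

theorem first_passage_iff_of_max_rec (ha0 : 0 ≤ a) (ha1 : a ≤ 1) (hu : 0 ≤ u)
    (hx : ∀ t, x (t + 1) = max (a * x t) (c * z (t + 1))) (n : ℕ) :
    ((∀ i < n + 1, x (i + 1) ≤ u) ∧ u < x (n + 2)) ↔
      a * x 0 ≤ u ∧ (∀ i < n + 1, c * z (i + 1) ≤ u) ∧ u < c * z (n + 2) := by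
  rw [← and_assoc, ← forall_lt_succ_le_iff_of_max_rec ha0 ha1 hu hx, and_congr_right_iff]
  intro h
  rw [← not_le, ← not_le, max_rec_succ_le_iff ha0 ha1 hu hx (h n n.lt_succ_self)]

end MaxRecursion

theorem ProbabilityTheory.iIndepFun.measureReal_head_forall_last
    {Ω β : Type*} [MeasurableSpace Ω] [MeasurableSpace β] {μ : Measure Ω} {Z : ℕ → Ω → β}
    (hZ : iIndepFun Z μ) {A B C : Set β} (hA : MeasurableSet A) (hB : MeasurableSet B)
    (hC : MeasurableSet C) (n : ℕ) :
    μ.real {ω | Z 0 ω ∈ A ∧ (∀ i < n + 1, Z (i + 1) ω ∈ B) ∧ Z (n + 2) ω ∈ C} =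
      μ.real (Z 0 ⁻¹' A) * (∏ i ∈ range (n + 1), μ.real (Z (i + 1) ⁻¹' B)) *
        μ.real (Z (n + 2) ⁻¹' C) := by
  set S : ℕ → Set β := fun i => if i = 0 then A else if i = n + 2 then C else B
  have hS0 : S 0 = A := if_pos rfl
  have hSmid : ∀ m < n + 1, S (m + 1) = B := fun m hm => by
    simp only [S, if_neg m.succ_ne_zero, if_neg (show m + 1 ≠ n + 2 by omega)]
  have hSlast : S (n + 2) = C := by simp [S]
  have hS : ∀ i ∈ range (n + 3), MeasurableSet (S i) := by
    intro i _
    simp only [S]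
    split_ifs <;> assumption
  have hevent : {ω | Z 0 ω ∈ A ∧ (∀ i < n + 1, Z (i + 1) ω ∈ B) ∧ Z (n + 2) ω ∈ C} =
      ⋂ i ∈ range (n + 3), Z i ⁻¹' S i := by
    ext ω
    simp only [Set.mem_ofPred_eq, Set.mem_iInter, mem_range, Set.mem_preimage]
    rw [Nat.forall_lt_succ_left (n := n + 2), Nat.forall_lt_succ_right (n := n + 1), hS0, hSlast]
    exact and_congr_right' (and_congr_left' (forall₂_congr fun m hm => by rw [hSmid m hm]))
  simp only [measureReal_def, ← ENNReal.toReal_prod, ← ENNReal.toReal_mul]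
  rw [hevent, hZ.measure_inter_preimage_eq_mul _ hS, prod_range_succ, prod_range_succ', hS0, hSlast,
    prod_congr rfl fun m hm => by rw [hSmid m (mem_range.1 hm)]]
  ac_rfl

section Frechet

variable {Ω : Type*} [MeasurableSpace Ω] {μ : Measure Ω} [IsProbabilityMeasure μ] {Z : Ω → ℝ}
  {c u : ℝ}

theorem measureReal_mul_le_of_frechet
    (hZ : ∀ x : ℝ, 0 < x → μ.real {ω | Z ω ≤ x} = Real.exp (-(1 / x)))
    (hc : 0 ≤ c) (hu : 0 < u) : μ.real {ω | c * Z ω ≤ u} = Real.exp (-(c / u)) := by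
  rcases hc.eq_or_lt with rfl | hc
  · simp [hu.le]
  · have hset : {ω | c * Z ω ≤ u} = {ω | Z ω ≤ u / c} := by
      ext ω
      rw [Set.mem_ofPred_eq, Set.mem_ofPred_eq, le_div_iff₀ hc, mul_comm]
    rw [hset, hZ _ (div_pos hu hc), one_div_div]

theorem measureReal_lt_mul_of_frechet (hZm : Measurable Z)
    (hZ : ∀ x : ℝ, 0 < x → μ.real {ω | Z ω ≤ x} = Real.exp (-(1 / x)))
    (hc : 0 ≤ c) (hu : 0 < u) : μ.real {ω | u < c * Z ω} = 1 - Real.exp (-(c / u)) := by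
  have hset : {ω | u < c * Z ω} = {ω | c * Z ω ≤ u}ᶜ := by
    ext ω
    simp
  rw [hset, probReal_compl_eq_one_sub (measurableSet_le (by fun_prop) measurable_const),
    measureReal_mul_le_of_frechet hZ hc hu]

end Frechet

theorem armax_first_hitting_time_distribution_general
    {Ω : Type*} [MeasurableSpace Ω] (μ : Measure Ω) [IsProbabilityMeasure μ]
    (Z X : ℕ → Ω → ℝ) (hZmeas : ∀ i, Measurable (Z i))
    (hindep : iIndepFun Z μ)
    (hfrechet : ∀ i, ∀ x : ℝ, 0 < x →
      (μ {ω | Z i ω ≤ x}).toReal = Real.exp (-(1 / x)))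
    (α : ℝ) (hα0 : 0 ≤ α) (hα1 : α < 1)
    (hX0 : X 0 = Z 0)
    (hXrec : ∀ t ω, X (t + 1) ω = max (α * X t ω) ((1 - α) * Z (t + 1) ω))
    (ρ xρ : ℝ) (hxρ : 0 < xρ)
    (hquant : Real.exp (-(1 / xρ)) = 1 - ρ)
    (j : ℕ) (hj : 2 ≤ j) :
    (μ {ω | (∀ i, 1 ≤ i → i ≤ j - 1 → X i ω ≤ xρ) ∧ X j ω > xρ}).toReal
      = (1 - (1 - ρ) ^ (1 - α)) * (1 - ρ) ^ ((1 - α) * ((j : ℝ) - 2) + 1) := by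
  obtain ⟨n, rfl⟩ : ∃ n, j = n + 2 := ⟨j - 2, by omega⟩
  have hθ : 0 ≤ 1 - α := by linarith
  have hevent : {ω | (∀ i, 1 ≤ i → i ≤ n + 2 - 1 → X i ω ≤ xρ) ∧ X (n + 2) ω > xρ} =
      {ω | α * Z 0 ω ≤ xρ ∧ (∀ i < n + 1, (1 - α) * Z (i + 1) ω ≤ xρ) ∧
        xρ < (1 - α) * Z (n + 2) ω} := by
    ext ω
    have hidx : (∀ i, 1 ≤ i → i ≤ n + 2 - 1 → X i ω ≤ xρ) ↔ ∀ i < n + 1, X (i + 1) ω ≤ xρ :=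
      ⟨fun h i hi => h (i + 1) (by omega) (by omega),
        fun h i h1 h2 => by simpa [Nat.sub_add_cancel h1] using h (i - 1) (by omega)⟩
    rw [Set.mem_ofPred_eq, Set.mem_ofPred_eq, hidx, gt_iff_lt, ← hX0]
    exact first_passage_iff_of_max_rec (x := (X · ω)) (z := (Z · ω)) hα0 hα1.le hxρ.le
      (hXrec · ω) n
  rw [← measureReal_def, hevent]
  refine (hindep.measureReal_head_forall_last (A := {x | α * x ≤ xρ})
      (B := {x | (1 - α) * x ≤ xρ}) (C := {x | xρ < (1 - α) * x})
      (measurableSet_le (by fun_prop) measurable_const)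
      (measurableSet_le (by fun_prop) measurable_const) (measurableSet_lt measurable_const (by fun_prop)) n).trans ?_
  simp only [Set.preimage_ofPred_eq]
  rw [measureReal_mul_le_of_frechet (hfrechet 0) hα0 hxρ,
    prod_congr rfl fun i _ => measureReal_mul_le_of_frechet (hfrechet (i + 1)) hθ hxρ,
    measureReal_lt_mul_of_frechet (hZmeas _) (hfrechet _) hθ hxρ, prod_const, card_range,
    ← hquant, ← Real.exp_mul, ← Real.exp_mul, ← Real.exp_nat_mul, ← Real.exp_add]
  push_cast
  ring_nf

/-- for the ARMAX process with iid standard Fréchet innovations,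
P{T*(x_ρ) = j} = (1 − (1−ρ)^θ)(1−ρ)^{θ(j−2)+1} for j ≥ 2, θ = 1−α. -/
theorem armax_first_hitting_time_distribution
    {Ω : Type*} [MeasurableSpace Ω] (μ : Measure Ω) [IsProbabilityMeasure μ]
    (Z X : ℕ → Ω → ℝ) (hZmeas : ∀ i, Measurable (Z i))
    (hindep : iIndepFun Z μ)
    (hZpos : ∀ i ω, 0 < Z i ω)
    (hfrechet : ∀ i, ∀ x : ℝ, 0 < x →
      (μ {ω | Z i ω ≤ x}).toReal = Real.exp (-(1 / x)))
    (α : ℝ) (hα0 : 0 ≤ α) (hα1 : α < 1)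
    (hX0 : X 0 = Z 0)
    (hXrec : ∀ t ω, X (t + 1) ω = max (α * X t ω) ((1 - α) * Z (t + 1) ω))
    (ρ xρ : ℝ) (hρ : 0 < ρ) (hρ1 : ρ < 1) (hxρ : 0 < xρ)
    (hquant : Real.exp (-(1 / xρ)) = 1 - ρ)
    (j : ℕ) (hj : 2 ≤ j) :
    (μ {ω | (∀ i, 1 ≤ i → i ≤ j - 1 → X i ω ≤ xρ) ∧ X j ω > xρ}).toReal
      = (1 - (1 - ρ) ^ (1 - α)) * (1 - ρ) ^ ((1 - α) * ((j : ℝ) - 2) + 1) :=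
  armax_first_hitting_time_distribution_general μ Z X hZmeas hindep hfrechet α hα0 hα1 hX0 hXrec ρ
    xρ hxρ hquant j hj
end

section
/- For the moving-maximum process X_t = max_{i=0..m} α_i Z_{t−i} with iid standard Fréchet Z_t, ordered coefficients α_0 ≥ α_1 ≥ ... ≥ α_m ≥ 0 summing to 1, the first hitting time of the quantile x_ρ satisfies P{T*(x_ρ)=j} = (1 − (1−ρ)^{α_0})(1−ρ)^{1+α_0(j−2)} for j ≥ 2. -/
open MeasureTheory ProbabilityTheory

/-!
Because the weights decrease and `Z > 0`, the variable `Z_s` enters `X_1, X_2, …` with its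
largest weight `α_{max(1-s,0)}` (written `α (1 - s).toNat`) at the first time `max(s,1)` it
appears, and every later appearance is dominated by that one. Hence
`{X_1, …, X_{j-1} ≤ u < X_j}` is the intersection of the independent events
`{α_{max(1-s,0)} Z_s ≤ u}`, `1 - m ≤ s < j`, and `{u < α_0 Z_j}`. With `q = exp(-1/u)`, the
scaling of the Fréchet law gives them probabilities `q ^ α_{max(1-s,0)}` and `1 - q ^ α_0`, and
the exponents add up to `∑ α_i + (j - 2) α_0 = 1 + α_0 (j - 2)`.
-/

section Frechet

variable {Ω : Type*} [MeasurableSpace Ω] {μ : Measure Ω} [IsProbabilityMeasure μ] {Y : Ω → ℝ}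
  {u c : ℝ}

lemma frechet_measure_mul_le (hY : ∀ x, 0 < x → (μ {ω | Y ω ≤ x}).toReal = Real.exp (-(1 / x)))
    (hu : 0 < u) (hc : 0 ≤ c) :
    (μ (Y ⁻¹' {x | c * x ≤ u})).toReal = Real.exp (-(1 / u)) ^ c := by
  rcases hc.eq_or_lt with rfl | hc
  · simp [hu.le]
  · have hset : Y ⁻¹' {x | c * x ≤ u} = {ω | Y ω ≤ u / c} := by
      ext ω
      change c * Y ω ≤ u ↔ Y ω ≤ u / c
      rw [le_div_iff₀ hc, mul_comm]
    rw [hset, hY _ (div_pos hu hc), ← Real.exp_mul]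
    congr 1
    field_simp

lemma frechet_measure_lt_mul (hYm : Measurable Y)
    (hY : ∀ x, 0 < x → (μ {ω | Y ω ≤ x}).toReal = Real.exp (-(1 / x)))
    (hu : 0 < u) (hc : 0 ≤ c) :
    (μ (Y ⁻¹' {x | u < c * x})).toReal = 1 - Real.exp (-(1 / u)) ^ c := by
  have hcompl : Y ⁻¹' {x | u < c * x} = (Y ⁻¹' {x | c * x ≤ u})ᶜ := by
    ext ω
    simp
  rw [hcompl,
    prob_compl_eq_one_sub (hYm (measurableSet_le (measurable_const_mul c) measurable_const)),
    ENNReal.toReal_sub_of_le prob_le_one ENNReal.one_ne_top, ENNReal.toReal_one,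
    frechet_measure_mul_le hY hu hc]

end Frechet

lemma ProbabilityTheory.iIndepFun.measure_preimage_inter_biInter {Ω ι β : Type*}
    [MeasurableSpace Ω] [MeasurableSpace β] {μ : Measure Ω} {f : ι → Ω → β} (hf : iIndepFun f μ)
    {i : ι} {S : Finset ι} (hi : i ∉ S) {A : Set β} {B : ι → Set β} (hA : MeasurableSet A)
    (hB : ∀ s ∈ S, MeasurableSet (B s)) :
    μ (f i ⁻¹' A ∩ ⋂ s ∈ S, f s ⁻¹' B s) = μ (f i ⁻¹' A) * ∏ s ∈ S, μ (f s ⁻¹' B s) := by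
  classical
  have hne : ∀ s ∈ S, s ≠ i := fun s hs h => hi (h ▸ hs)
  have hupd : ∀ s ∈ S, f s ⁻¹' Function.update B i A s = f s ⁻¹' B s := fun s hs => by
    rw [Function.update_of_ne (hne s hs)]
  have key := hf.measure_inter_preimage_eq_mul (insert i S) (sets := Function.update B i A)
    ((Finset.forall_mem_insert _ _ _).2 ⟨by rwa [Function.update_self],
      fun s hs => by rw [Function.update_of_ne (hne s hs)]; exact hB s hs⟩)
  rwa [Finset.set_biInter_insert, Finset.prod_insert hi, Function.update_self,
    Set.iInter₂_congr hupd, Finset.prod_congr rfl fun s hs => congrArg μ (hupd s hs)] at key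

def movingMax (m : ℕ) (α : ℕ → ℝ) (z : ℤ → ℝ) (t : ℤ) : ℝ :=
  (Finset.range (m + 1)).sup' Finset.nonempty_range_add_one fun i => α i * z (t - i)

namespace movingMax

variable {m : ℕ} {α : ℕ → ℝ} {z : ℤ → ℝ} {u : ℝ}

lemma le_iff {t : ℤ} : movingMax m α z t ≤ u ↔ ∀ i ≤ m, α i * z (t - i) ≤ u := by
  simp [movingMax]

lemma lt_iff {t : ℤ} : u < movingMax m α z t ↔ ∃ i ≤ m, u < α i * z (t - i) := by
  simp [movingMax, Finset.lt_sup'_iff]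

lemma mul_le_earliest_mul (hα : AntitoneOn α (Set.Iic m)) (hz : ∀ s, 0 ≤ z s) {t : ℤ} (ht : 1 ≤ t)
    {i : ℕ} (hi : i ≤ m) : α i * z (t - i) ≤ α (1 - (t - i)).toNat * z (t - i) :=
  mul_le_mul_of_nonneg_right (hα (by simp only [Set.mem_Iic]; omega) (by simpa) (by omega)) (hz _)

lemma forall_le_iff (hα : AntitoneOn α (Set.Iic m)) (hz : ∀ s, 0 ≤ z s) {j : ℕ} (hj : 2 ≤ j) :
    (∀ t : ℕ, 1 ≤ t → t ≤ j - 1 → movingMax m α z t ≤ u) ↔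
      ∀ s ∈ Finset.Ico (1 - m : ℤ) j, α (1 - s).toNat * z s ≤ u := by
  constructor
  · intro h s hs
    rw [Finset.mem_Ico] at hs
    have hlag := le_iff.1 (h (max s 1).toNat (by omega) (by omega)) (1 - s).toNat (by omega)
    rwa [show ((max s 1).toNat : ℤ) - (1 - s).toNat = s by omega] at hlag
  · intro h t ht htj
    refine le_iff.2 fun i hi => (mul_le_earliest_mul hα hz (by omega) hi).trans (h _ ?_)
    rw [Finset.mem_Ico]
    omega

lemma lt_iff_of_forall_le (hα : AntitoneOn α (Set.Iic m)) (hz : ∀ s, 0 ≤ z s) {j : ℕ}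
    (hj : 1 ≤ j) (h : ∀ s ∈ Finset.Ico (1 - m : ℤ) j, α (1 - s).toNat * z s ≤ u) :
    u < movingMax m α z j ↔ u < α 0 * z j := by
  refine ⟨fun hlt => ?_, fun hlt => lt_iff.2 ⟨0, Nat.zero_le _, by simpa using hlt⟩⟩
  obtain ⟨i, hi, hlt⟩ := lt_iff.1 hlt
  rcases Nat.eq_zero_or_pos i with rfl | hpos
  · simpa using hlt
  · refine absurd (h _ ?_) (not_le.2 (hlt.trans_le (mul_le_earliest_mul hα hz (by omega) hi)))
    rw [Finset.mem_Ico]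
    omega

lemma firstPassage_iff (hα : AntitoneOn α (Set.Iic m)) (hz : ∀ s, 0 ≤ z s) {j : ℕ}
    (hj : 2 ≤ j) :
    ((∀ t : ℕ, 1 ≤ t → t ≤ j - 1 → movingMax m α z t ≤ u) ∧ movingMax m α z j > u) ↔
      u < α 0 * z j ∧ ∀ s ∈ Finset.Ico (1 - m : ℤ) j, α (1 - s).toNat * z s ≤ u := by
  rw [forall_le_iff hα hz hj, and_comm, gt_iff_lt]
  exact and_congr_left (lt_iff_of_forall_le hα hz (by omega))

lemma sum_earliest_coeff_Ico {j : ℕ} (hj : 2 ≤ j) :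
    ∑ s ∈ Finset.Ico (1 - m : ℤ) j, α (1 - s).toNat =
      ∑ i ∈ Finset.range (m + 1), α i + α 0 * ((j : ℝ) - 2) := by
  rw [← Finset.Ico_union_Ico_eq_Ico (b := 2) (by omega) (by omega),
    Finset.sum_union (Finset.Ico_disjoint_Ico_consecutive _ _ _)]
  congr 1
  · refine Finset.sum_nbij' (fun s => (1 - s).toNat) (fun i => 1 - i) ?_ ?_ ?_ ?_ ?_ <;>
      intros <;> simp_all <;> omega
  · rw [Finset.sum_congr rfl fun s hs => by rw [Int.toNat_eq_zero.2 (by simp at hs; omega)],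
      Finset.sum_const, Int.card_Ico, nsmul_eq_mul, mul_comm]
    congr 1
    rw [show ((j : ℤ) - 2).toNat = j - 2 by omega, Nat.cast_sub hj]
    norm_num

end movingMax

theorem mm_first_hitting_time_distribution_general
    {Ω : Type*} [MeasurableSpace Ω] (μ : Measure Ω) [IsProbabilityMeasure μ]
    (Z : ℤ → Ω → ℝ) (hZmeas : ∀ i, Measurable (Z i))
    (hindep : iIndepFun Z μ)
    (hZpos : ∀ i ω, 0 < Z i ω)
    (hfrechet : ∀ i, ∀ x : ℝ, 0 < x →
      (μ {ω | Z i ω ≤ x}).toReal = Real.exp (-(1 / x)))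
    (m : ℕ) (α : ℕ → ℝ)
    (hord : ∀ i, i < m → α (i + 1) ≤ α i) (hαnn : 0 ≤ α m)
    (hsum : ∑ i ∈ Finset.range (m + 1), α i = 1)
    (X : ℤ → Ω → ℝ)
    (hX : ∀ t ω, X t ω =
      (Finset.range (m + 1)).sup' (Finset.nonempty_range_add_one)
        (fun i => α i * Z (t - i) ω))
    (ρ xρ : ℝ) (hxρ : 0 < xρ)
    (hquant : Real.exp (-(1 / xρ)) = 1 - ρ)
    (j : ℕ) (hj : 2 ≤ j) :
    (μ {ω | (∀ i : ℕ, 1 ≤ i → i ≤ j - 1 → X i ω ≤ xρ) ∧ X j ω > xρ}).toReal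
      = (1 - (1 - ρ) ^ (α 0)) * (1 - ρ) ^ (1 + α 0 * ((j : ℝ) - 2)) := by
  have hα : AntitoneOn α (Set.Iic m) := antitoneOn_of_succ_le Set.ordConnected_Iic
    fun i _ _ hi => hord i (by simpa [Order.succ_eq_add_one, Nat.succ_le_iff] using hi)
  have hα_nonneg : ∀ i ≤ m, 0 ≤ α i := fun i hi => hαnn.trans (hα hi Set.self_mem_Iic hi)
  have hX' : ∀ t ω, X t ω = movingMax m α (Z · ω) t := hX
  have hevent : {ω | (∀ i : ℕ, 1 ≤ i → i ≤ j - 1 → X i ω ≤ xρ) ∧ X j ω > xρ} =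
      Z j ⁻¹' {x | xρ < α 0 * x} ∩
        ⋂ s ∈ Finset.Ico (1 - m : ℤ) j, Z s ⁻¹' {x | α (1 - s).toNat * x ≤ xρ} := by
    ext ω
    simpa only [hX', Set.mem_ofPred_eq, Set.mem_inter_iff, Set.mem_iInter, Set.mem_preimage]
      using movingMax.firstPassage_iff hα (fun s => (hZpos s ω).le) hj
  rw [hevent, hindep.measure_preimage_inter_biInter (by simp)
      (measurableSet_lt measurable_const (measurable_const_mul _))
      (B := fun s => {x | α (1 - s).toNat * x ≤ xρ})
      fun s _ => measurableSet_le (measurable_const_mul _) measurable_const,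
    ENNReal.toReal_mul, ENNReal.toReal_prod]
  have hlag : ∀ s ∈ Finset.Ico (1 - m : ℤ) j, (1 - s).toNat ≤ m := fun s hs => by
    rw [Finset.mem_Ico] at hs; omega
  rw [frechet_measure_lt_mul (hZmeas j) (hfrechet j) hxρ (hα_nonneg 0 m.zero_le),
    Finset.prod_congr rfl fun s hs =>
      frechet_measure_mul_le (hfrechet s) hxρ (hα_nonneg _ (hlag s hs)),
    ← Real.rpow_sum_of_pos (Real.exp_pos _), movingMax.sum_earliest_coeff_Ico hj, hsum, hquant]

/-- for the moving-maximum process X_t = max_{0≤i≤m} α_i Z_{t−i}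
with iid standard Fréchet Z_t and α_0 ≥ α_1 ≥ ... ≥ α_m ≥ 0 summing to 1,
P{T*(x_ρ)=j} = (1 − (1−ρ)^{α_0})(1−ρ)^{1+α_0(j−2)} for j ≥ 2. -/
theorem mm_first_hitting_time_distribution
    {Ω : Type*} [MeasurableSpace Ω] (μ : Measure Ω) [IsProbabilityMeasure μ]
    (Z : ℤ → Ω → ℝ) (hZmeas : ∀ i, Measurable (Z i))
    (hindep : iIndepFun Z μ)
    (hZpos : ∀ i ω, 0 < Z i ω)
    (hfrechet : ∀ i, ∀ x : ℝ, 0 < x →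
      (μ {ω | Z i ω ≤ x}).toReal = Real.exp (-(1 / x)))
    (m : ℕ) (α : ℕ → ℝ)
    (hord : ∀ i, i < m → α (i + 1) ≤ α i) (hαnn : 0 ≤ α m)
    (hsum : ∑ i ∈ Finset.range (m + 1), α i = 1)
    (X : ℤ → Ω → ℝ)
    (hX : ∀ t ω, X t ω =
      (Finset.range (m + 1)).sup' (Finset.nonempty_range_add_one)
        (fun i => α i * Z (t - i) ω))
    (ρ xρ : ℝ) (hρ : 0 < ρ) (hρ1 : ρ < 1) (hxρ : 0 < xρ)
    (hquant : Real.exp (-(1 / xρ)) = 1 - ρ)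
    (j : ℕ) (hj : 2 ≤ j) :
    (μ {ω | (∀ i : ℕ, 1 ≤ i → i ≤ j - 1 → X i ω ≤ xρ) ∧ X j ω > xρ}).toReal
      = (1 - (1 - ρ) ^ (α 0)) * (1 - ρ) ^ (1 + α 0 * ((j : ℝ) - 2)) :=
  mm_first_hitting_time_distribution_general μ Z hZmeas hindep hZpos hfrechet m α hord hαnn hsum X
    hX ρ xρ hxρ hquant j hj
end
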